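/- Let g: [0,1] → ℝ₊ be continuous with g(0)=g(1)=0, and define the relation s ≈_g t by: s ∼_g t (i.e. d_g(s,t)=0) and either g(r) > g(s) for every r ∈ (s∧t, s∨t), or (s∧t = min cl_g(s) and s∨t = max cl_g(s)), where cl_g(s) is the d_g-equivalence class of s. Then the set {(s,t) ∈ [0,1]² : s ≈_g t} is closed in [0,1]². -/

import Mathlib

/-!
The map `(s, t) ↦ d_g(s, t)` is continuous on `[0,1]²`: after extending `g` continuously to `ℝ`,
the minimum over `[s∧t, s∨t]` is an infimum of `λ ↦ g (lineMap s t λ)` over the fixed compact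
set `[0,1]`. So a limit `(s, t)` of related pairs satisfies `s ∼_g t`. If the first alternative
fails at `(s, t)`, some `r` strictly between `s` and `t` has `g r = g s`. A point `w` of the class
of `s` outside `[s∧t, s∨t]` is then joined to `r` above the level `g r`, so it lies in the class of
every nearby related pair `(s', t')` that still straddles `r` and excludes `w`; since also
`g s' = g r`, such a pair satisfies neither alternative. Hence the class of `s` lies in
`[s∧t, s∨t]`, which is the second alternative.
-/

/-- The coding pseudo-distance `d_g(s,t) = g(s) + g(t) − 2 min_{[s∧t,s∨t]} g`. -/
noncomputable def dg (g : ℝ → ℝ) (s t : ℝ) : ℝ :=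
  g s + g t - 2 * sInf (g '' Set.Icc (min s t) (max s t))

/-- The `d_g`-equivalence class of `s` within `[0,1]`. -/
def clg (g : ℝ → ℝ) (s : ℝ) : Set ℝ :=
  {u | u ∈ Set.Icc (0:ℝ) 1 ∧ dg g s u = 0}

/-- The relation `s ≈_g t`. -/
def approxg (g : ℝ → ℝ) (s t : ℝ) : Prop :=
  dg g s t = 0 ∧
    ((∀ r ∈ Set.Ioo (min s t) (max s t), g s < g r) ∨
      (min s t = sInf (clg g s) ∧ max s t = sSup (clg g s)))

open Set

lemma mem_uIcc_of_mem_uIcc_of_notMem_uIcc {α : Type*} [LinearOrder α] {a b r w : α}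
    (hr : r ∈ uIcc a b) (hw : w ∉ uIcc a b) : a ∈ uIcc w r ∨ b ∈ uIcc w r := by
  simp only [mem_uIcc] at *
  grind

lemma min_eq_csInf_and_max_eq_csSup {α : Type*} [ConditionallyCompleteLinearOrder α]
    {C : Set α} {s t : α} (hs : s ∈ C) (ht : t ∈ C) (hC : C ⊆ uIcc s t) :
    min s t = sInf C ∧ max s t = sSup C := by
  have hmin : min s t ∈ C := by rcases min_choice s t with h | h <;> rw [h] <;> assumption
  have hmax : max s t ∈ C := by rcases max_choice s t with h | h <;> rw [h] <;> assumption
  exact ⟨(IsLeast.csInf_eq ⟨hmin, fun _ hw => (hC hw).1⟩).symm,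
    (IsGreatest.csSup_eq ⟨hmax, fun _ hw => (hC hw).2⟩).symm⟩

lemma isOpen_setOf_mem_Ioo_and_notMem_uIcc (r w : ℝ) :
    IsOpen {q : ℝ × ℝ | r ∈ Ioo (min q.1 q.2) (max q.1 q.2) ∧ w ∉ uIcc q.1 q.2} := by
  have hmin : Continuous fun q : ℝ × ℝ => min q.1 q.2 := continuous_fst.min continuous_snd
  have hmax : Continuous fun q : ℝ × ℝ => max q.1 q.2 := continuous_fst.max continuous_snd
  simp only [mem_Ioo, uIcc, mem_Icc, not_and_or, not_le]
  exact ((isOpen_lt hmin continuous_const).inter (isOpen_lt continuous_const hmax)).inter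
    ((isOpen_lt continuous_const hmin).union (isOpen_lt hmax continuous_const))

lemma continuous_sInf_image_uIcc {g : ℝ → ℝ} (hg : Continuous g) :
    Continuous fun p : ℝ × ℝ => sInf (g '' uIcc p.1 p.2) := by
  have himage : ∀ p : ℝ × ℝ,
      g '' uIcc p.1 p.2 = (fun l => g (AffineMap.lineMap p.1 p.2 l)) '' Icc (0:ℝ) 1 := by
    intro p
    rw [← segment_eq_uIcc, segment_eq_image_lineMap, image_image]
  simp_rw [himage]
  exact isCompact_Icc.continuous_sInf
    (hg.comp (continuous_fst.fst.lineMap continuous_fst.snd continuous_snd))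

section dg

variable {g : ℝ → ℝ}

lemma dg_self (s : ℝ) : dg g s s = 0 := by
  simp only [dg, min_self, max_self, Icc_self, image_singleton, csInf_singleton]
  ring

lemma dg_eq_zero_iff {s t : ℝ} (hg : ContinuousOn g (uIcc s t)) :
    dg g s t = 0 ↔ g t = g s ∧ ∀ r ∈ uIcc s t, g s ≤ g r := by
  have hbdd : BddBelow (g '' uIcc s t) := (isCompact_uIcc.image_of_continuousOn hg).bddBelow
  have hs : g s ∈ g '' uIcc s t := mem_image_of_mem g left_mem_uIcc
  have ht : g t ∈ g '' uIcc s t := mem_image_of_mem g right_mem_uIcc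
  change g s + g t - 2 * sInf (g '' uIcc s t) = 0 ↔ _
  constructor
  · intro h
    have h1 := csInf_le hbdd hs
    have h2 := csInf_le hbdd ht
    exact ⟨by linarith, fun r hr => by linarith [csInf_le hbdd (mem_image_of_mem g hr)]⟩
  · rintro ⟨hts, hmin⟩
    have hinf : sInf (g '' uIcc s t) = g s := IsLeast.csInf_eq ⟨hs, forall_mem_image.2 hmin⟩
    rw [hinf, hts]
    ring

lemma continuousOn_dg {a b : ℝ} (hab : a ≤ b) (hg : ContinuousOn g (Icc a b)) :
    ContinuousOn (fun p : ℝ × ℝ => dg g p.1 p.2) (Icc a b ×ˢ Icc a b) := by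
  set G : ℝ → ℝ := fun x => g (projIcc a b hab x)
  have hG : Continuous G := hg.comp_continuous (continuous_subtype_val.comp continuous_projIcc)
    fun x => (projIcc a b hab x).2
  have hGg : EqOn G g (Icc a b) := fun x hx => by simp only [G, projIcc_of_mem hab hx]
  have hcont : Continuous fun p : ℝ × ℝ => G p.1 + G p.2 - 2 * sInf (G '' uIcc p.1 p.2) :=
    ((hG.comp continuous_fst).add (hG.comp continuous_snd)).sub
      (continuous_const.mul (continuous_sInf_image_uIcc hG))
  refine hcont.continuousOn.congr fun p ⟨hs, ht⟩ => ?_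
  change g p.1 + g p.2 - 2 * sInf (g '' uIcc p.1 p.2) = _
  rw [← hGg hs, ← hGg ht, ← (hGg.mono (uIcc_subset_Icc hs ht)).image_eq]

end dg

lemma not_approxg_of_mem_Ioo_of_notMem_uIcc {g : ℝ → ℝ} (hg : ContinuousOn g (Icc 0 1))
    {s t r w : ℝ} (hs : s ∈ Icc 0 1) (ht : t ∈ Icc 0 1) (hw : w ∈ Icc 0 1)
    (hr : r ∈ Ioo (min s t) (max s t)) (hwst : w ∉ uIcc s t) (hgw : g w = g r)
    (hwr : ∀ x ∈ uIcc w r, g r ≤ g x) : ¬ approxg g s t := by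
  rintro ⟨hd, halt⟩
  obtain ⟨hts, hst⟩ := (dg_eq_zero_iff (hg.mono (uIcc_subset_Icc hs ht))).1 hd
  have hrst : r ∈ uIcc s t := Ioo_subset_Icc_self hr
  have hlevel : g s = g r := by
    refine le_antisymm (hst r hrst) ?_
    rcases mem_uIcc_of_mem_uIcc_of_notMem_uIcc hrst hwst with h | h
    · exact hwr s h
    · exact hts ▸ hwr t h
  rcases halt with hlt | ⟨hmin, hmax⟩
  · exact (hlt r hr).ne hlevel
  have hsw : ∀ x ∈ uIcc s w, g s ≤ g x := by
    intro x hx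
    rcases uIcc_subset_uIcc_union_uIcc hx with hx | hx
    · exact hst x (uIcc_subset_uIcc_left hrst hx)
    · exact hlevel ▸ hwr x (uIcc_comm r w ▸ hx)
  have hw_mem : w ∈ clg g s :=
    ⟨hw, (dg_eq_zero_iff (hg.mono (uIcc_subset_Icc hs hw))).2 ⟨hgw.trans hlevel.symm, hsw⟩⟩
  have hbdd : clg g s ⊆ Icc 0 1 := fun _ hu => hu.1
  exact hwst ⟨hmin ▸ csInf_le (bddBelow_Icc.mono hbdd) hw_mem,
    hmax ▸ le_csSup (bddAbove_Icc.mono hbdd) hw_mem⟩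

theorem approxg_isClosed_general
    (g : ℝ → ℝ) (hg : ContinuousOn g (Set.Icc (0:ℝ) 1)) :
    IsClosed {p : ℝ × ℝ |
      p.1 ∈ Set.Icc (0:ℝ) 1 ∧ p.2 ∈ Set.Icc (0:ℝ) 1 ∧ approxg g p.1 p.2} := by
  refine closure_subset_iff_isClosed.1 fun p hp => ?_
  obtain ⟨⟨hs, ht⟩, hd⟩ : p ∈ Icc 0 1 ×ˢ Icc 0 1 ∩ (fun q => dg g q.1 q.2) ⁻¹' {0} := by
    refine closure_minimal (fun q hq => ?_) ?_ hp
    · exact ⟨⟨hq.1, hq.2.1⟩, hq.2.2.1⟩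
    · exact (continuousOn_dg zero_le_one hg).preimage_isClosed_of_isClosed
        (isClosed_Icc.prod isClosed_Icc) isClosed_singleton
  obtain ⟨-, hst⟩ := (dg_eq_zero_iff (hg.mono (uIcc_subset_Icc hs ht))).1 hd
  refine ⟨hs, ht, hd, or_iff_not_imp_left.2 fun hnot => ?_⟩
  push Not at hnot
  obtain ⟨r, hr, hrs⟩ := hnot
  have hlevel : g r = g p.1 := le_antisymm hrs (hst r (Ioo_subset_Icc_self hr))
  refine min_eq_csInf_and_max_eq_csSup ⟨hs, dg_self _⟩ ⟨ht, hd⟩ fun w ⟨hw, hdw⟩ => ?_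
  by_contra hwst
  obtain ⟨hgw, hsw⟩ := (dg_eq_zero_iff (hg.mono (uIcc_subset_Icc hs hw))).1 hdw
  have hwr : ∀ x ∈ uIcc w r, g r ≤ g x := by
    intro x hx
    rcases uIcc_subset_uIcc_union_uIcc hx with hx | hx
    · exact hlevel ▸ hsw x (uIcc_comm w p.1 ▸ hx)
    · exact hlevel ▸ hst x (uIcc_subset_uIcc_left (Ioo_subset_Icc_self hr) hx)
  obtain ⟨q, hqU, hqS⟩ := mem_closure_iff.1 hp _
    (isOpen_setOf_mem_Ioo_and_notMem_uIcc r w) ⟨hr, hwst⟩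
  exact not_approxg_of_mem_Ioo_of_notMem_uIcc hg hqS.1 hqS.2.1 hw hqU.1 hqU.2
    (hgw.trans hlevel.symm) hwr hqS.2.2

/-- For `g : [0,1] → ℝ₊` continuous with `g(0) = g(1) = 0`, the graph
`{(s,t) ∈ [0,1]² : s ≈_g t}` is closed. -/
theorem approxg_isClosed
    (g : ℝ → ℝ) (hg : ContinuousOn g (Set.Icc (0:ℝ) 1))
    (hnn : ∀ s ∈ Set.Icc (0:ℝ) 1, 0 ≤ g s)
    (h0 : g 0 = 0) (h1 : g 1 = 0) :
    IsClosed {p : ℝ × ℝ |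
      p.1 ∈ Set.Icc (0:ℝ) 1 ∧ p.2 ∈ Set.Icc (0:ℝ) 1 ∧ approxg g p.1 p.2} :=
  approxg_isClosed_general g hg
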